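/- If ρ : L^∞(P) → ℝ has the Lebesgue property and ρ^{**} is real-valued, then ρ^{**} has the Lebesgue property; equivalently, each sublevel set {Y : ρ*(Y) ≤ λ} is uniformly P-integrable. -/

import Mathlib

open MeasureTheory
noncomputable section

/-- The Lebesgue property: continuity along `L^∞`-bounded sequences converging in
probability. -/
def LebesgueProperty {Ω : Type*} [MeasurableSpace Ω] (P : Measure Ω)
    [IsProbabilityMeasure P] (ρ : Lp ℝ ⊤ P → ℝ) : Prop :=
  ∀ (Xn : ℕ → Lp ℝ ⊤ P) (X : Lp ℝ ⊤ P), (∃ M : ℝ, ∀ n, ‖Xn n‖ ≤ M) →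
    TendstoInMeasure P (fun n => ⇑(Xn n)) Filter.atTop ⇑X →
    Filter.Tendsto (fun n => ρ (Xn n)) Filter.atTop (nhds (ρ X))

/-- The convex conjugate `ρ* : L¹(P) → EReal`. -/
def conjugate {Ω : Type*} [MeasurableSpace Ω] (P : Measure Ω) [IsProbabilityMeasure P]
    (ρ : Lp ℝ ⊤ P → ℝ) (Y : Lp ℝ 1 P) : EReal :=
  ⨆ X : Lp ℝ ⊤ P, ((∫ ω, X ω * Y ω ∂P - ρ X : ℝ) : EReal)

/-! Outside a sublevel set `{ρ* ≤ λ}` the supremum defining `ρ**` is irrelevant: monotonicity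
and cash additivity give `ρ*(Y) ≥ c ‖Y‖₁ - ρ(0) - c` for all `c ≥ 0`, so for `‖X‖∞ ≤ M` and `λ`
large enough (depending on `M`) only the `Y` with `ρ*(Y) ≤ λ` contribute. Hence `ρ**` has the
Lebesgue property as soon as `∫ Xₙ Y → ∫ X Y` uniformly on each sublevel set.

This uniformity comes from the Lebesgue property of `ρ`: for `Yₙ` in `{ρ* ≤ λ}` and any `κ`, the
test functions `Uₙ = κ · sign(Yₙ) |Xₙ - X|` are bounded and tend to `0` in measure, and the
Fenchel inequality gives `κ ∫ |Xₙ - X| |Yₙ| = ∫ Uₙ Yₙ ≤ λ + ρ(Uₙ) → λ + ρ(0)`. -/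

open Filter Topology

theorem MeasureTheory.TendstoInMeasure.of_norm_le_mul_norm_sub {α ι E F : Type*}
    [MeasurableSpace α] {μ : Measure α} [SeminormedAddCommGroup E] [SeminormedAddCommGroup F]
    {l : Filter ι} {f : ι → α → E} {g : α → E} {u : ι → α → F} (hf : TendstoInMeasure μ f l g) {C : ℝ}
    (hu : ∀ i, ∀ᵐ x ∂μ, ‖u i x‖ ≤ C * ‖f i x - g x‖) : TendstoInMeasure μ u l 0 := by
  rw [tendstoInMeasure_iff_norm] at hf ⊢
  intro ε hε
  have hC : 0 < max C 1 := lt_max_of_lt_right one_pos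
  refine tendsto_of_tendsto_of_tendsto_of_le_of_le tendsto_const_nhds
    (hf (ε / max C 1) (by positivity)) (fun _ => zero_le) fun i => measure_mono_ae ?_
  filter_upwards [hu i] with x hx (hεx : ε ≤ ‖u i x - 0‖)
  change ε / max C 1 ≤ ‖f i x - g x‖
  rw [sub_zero] at hεx
  rw [div_le_iff₀ hC, mul_comm]
  exact hεx.trans (hx.trans (mul_le_mul_of_nonneg_right (le_max_left _ _) (norm_nonneg _)))

theorem measurable_coe_sign : Measurable fun x : ℝ => (SignType.sign x : ℝ) := by
  refine Monotone.measurable fun a b hab => ?_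
  simp only [sign_apply]
  split_ifs <;> norm_num <;> linarith

theorem abs_sign_mul_abs_le (x y : ℝ) : |(SignType.sign x : ℝ) * (|y|)| ≤ |y| := by
  rcases lt_trichotomy x 0 with hx | rfl | hx <;> simp [*]

section Pairing

variable {Ω : Type*} [MeasurableSpace Ω] {P : Measure Ω}

theorem integrable_coeFn_mul (X : Lp ℝ ⊤ P) (Y : Lp ℝ 1 P) :
    Integrable (fun ω => X ω * Y ω) P :=
  (L1.integrable_coeFn Y).mul_of_top_right (Lp.memLp X)

theorem integral_sub_mul (X X' : Lp ℝ ⊤ P) (Y : Lp ℝ 1 P) :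
    ∫ ω, (X - X') ω * Y ω ∂P = ∫ ω, X ω * Y ω ∂P - ∫ ω, X' ω * Y ω ∂P := by
  rw [← integral_sub (integrable_coeFn_mul X Y) (integrable_coeFn_mul X' Y)]
  refine integral_congr_ae ?_
  filter_upwards [Lp.coeFn_sub X X'] with ω hω
  rw [hω, Pi.sub_apply, sub_mul]

theorem abs_integral_mul_le_integral_abs_mul (f g : Ω → ℝ) :
    |∫ ω, f ω * g ω ∂P| ≤ ∫ ω, |f ω| * |g ω| ∂P := by
  simpa only [abs_mul] using abs_integral_le_integral_abs (f := fun ω => f ω * g ω) (μ := P)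

theorem abs_integral_mul_le (X : Lp ℝ ⊤ P) (Y : Lp ℝ 1 P) :
    |∫ ω, X ω * Y ω ∂P| ≤ ‖X‖ * ‖Y‖ := by
  have hXY : ∫ ω, X ω * Y ω ∂P = ∫ ω, (X • Y : Lp ℝ 1 P) ω ∂P :=
    integral_congr_ae (Lp.coeFn_lpSMul X Y).symm
  rw [hXY, ← Real.norm_eq_abs]
  exact (norm_integral_le_integral_norm _).trans
    ((L1.norm_eq_integral_norm _).symm.trans_le (Lp.norm_smul_le X Y))

def signMulAbs (Y : Lp ℝ 1 P) (V : Lp ℝ ⊤ P) : Lp ℝ ⊤ P :=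
  MemLp.toLp (fun ω => (SignType.sign (Y ω) : ℝ) * |V ω|) <|
    (Lp.memLp V).mono
      ((measurable_coe_sign.comp_aemeasurable (Lp.aestronglyMeasurable Y).aemeasurable).mul
        (Lp.aestronglyMeasurable V).aemeasurable.abs).aestronglyMeasurable
      (ae_of_all _ fun _ => abs_sign_mul_abs_le _ _)

theorem coeFn_signMulAbs (Y : Lp ℝ 1 P) (V : Lp ℝ ⊤ P) :
    signMulAbs Y V =ᵐ[P] fun ω => (SignType.sign (Y ω) : ℝ) * |V ω| :=
  MemLp.coeFn_toLp _

theorem ae_abs_signMulAbs_le (Y : Lp ℝ 1 P) (V : Lp ℝ ⊤ P) :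
    ∀ᵐ ω ∂P, |signMulAbs Y V ω| ≤ |V ω| := by
  filter_upwards [coeFn_signMulAbs Y V] with ω hω
  rw [hω]
  exact abs_sign_mul_abs_le _ _

theorem norm_signMulAbs_le (Y : Lp ℝ 1 P) (V : Lp ℝ ⊤ P) : ‖signMulAbs Y V‖ ≤ ‖V‖ :=
  Lp.norm_le_norm_of_ae_le (ae_abs_signMulAbs_le Y V)

theorem integral_signMulAbs_mul (Y : Lp ℝ 1 P) (V : Lp ℝ ⊤ P) :
    ∫ ω, signMulAbs Y V ω * Y ω ∂P = ∫ ω, |V ω| * |Y ω| ∂P := by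
  refine integral_congr_ae ?_
  filter_upwards [coeFn_signMulAbs Y V] with ω hω
  rw [hω, mul_right_comm, sign_mul_self, mul_comm]

end Pairing

section Conjugate

variable {Ω : Type*} [MeasurableSpace Ω] {P : Measure Ω} [IsProbabilityMeasure P]
  {ρ : Lp ℝ ⊤ P → ℝ}

theorem integral_mul_sub_le_conjugate (ρ : Lp ℝ ⊤ P → ℝ) (X : Lp ℝ ⊤ P) (Y : Lp ℝ 1 P) :
    ((∫ ω, X ω * Y ω ∂P - ρ X : ℝ) : EReal) ≤ conjugate P ρ Y :=
  le_iSup (fun X => ((∫ ω, X ω * Y ω ∂P - ρ X : ℝ) : EReal)) X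

theorem integral_mul_sub_le_of_conjugate_le (X : Lp ℝ ⊤ P) {Y : Lp ℝ 1 P} {c : ℝ}
    (hY : conjugate P ρ Y ≤ c) : ∫ ω, X ω * Y ω ∂P - ρ X ≤ c :=
  EReal.coe_le_coe_iff.1 ((integral_mul_sub_le_conjugate ρ X Y).trans hY)

theorem conjugate_ne_bot (ρ : Lp ℝ ⊤ P → ℝ) (Y : Lp ℝ 1 P) : conjugate P ρ Y ≠ ⊥ :=
  ne_bot_of_le_ne_bot (EReal.coe_ne_bot _) (integral_mul_sub_le_conjugate ρ 0 Y)

theorem le_add_of_ae_le (hmono : ∀ X Y : Lp ℝ ⊤ P, X ≤ Y → ρ X ≤ ρ Y)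
    (hcash : ∀ (X : Lp ℝ ⊤ P) (a : ℝ), ρ (X + Lp.const ⊤ P a) = ρ X + a)
    {X : Lp ℝ ⊤ P} {c : ℝ} (hX : ∀ᵐ ω ∂P, X ω ≤ c) : ρ X ≤ ρ 0 + c := by
  rw [← hcash]
  refine hmono _ _ ((Lp.coeFn_le _ _).1 ?_)
  filter_upwards [hX, Lp.coeFn_add (0 : Lp ℝ ⊤ P) (Lp.const ⊤ P c), Lp.coeFn_zero ℝ ⊤ P,
    Lp.coeFn_const ⊤ P c] with ω hω hadd hzero hconst
  rw [hadd, Pi.add_apply, hzero, hconst, Pi.zero_apply, zero_add]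
  exact hω

theorem mul_norm_sub_le_conjugate (hmono : ∀ X Y : Lp ℝ ⊤ P, X ≤ Y → ρ X ≤ ρ Y)
    (hcash : ∀ (X : Lp ℝ ⊤ P) (a : ℝ), ρ (X + Lp.const ⊤ P a) = ρ X + a)
    {c : ℝ} (hc : 0 ≤ c) (Y : Lp ℝ 1 P) :
    ((c * ‖Y‖ - ρ 0 - c : ℝ) : EReal) ≤ conjugate P ρ Y := by
  set X := signMulAbs Y (Lp.const ⊤ P c)
  have hconst : ∀ᵐ ω ∂P, |Lp.const ⊤ P c ω| = c := by
    filter_upwards [Lp.coeFn_const ⊤ P c] with ω hω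
    rw [hω, Function.const_apply, abs_of_nonneg hc]
  have hpair : ∫ ω, X ω * Y ω ∂P = c * ‖Y‖ := by
    rw [integral_signMulAbs_mul, L1.norm_eq_integral_norm, ← integral_const_mul]
    refine integral_congr_ae ?_
    filter_upwards [hconst] with ω hω
    rw [hω, Real.norm_eq_abs]
  have hρX : ρ X ≤ ρ 0 + c := by
    refine le_add_of_ae_le hmono hcash ?_
    filter_upwards [ae_abs_signMulAbs_le Y (Lp.const ⊤ P c), hconst] with ω hω hc
    exact (le_abs_self _).trans (hω.trans_eq hc)
  refine le_trans ?_ (integral_mul_sub_le_conjugate ρ X Y)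
  rw [EReal.coe_le_coe_iff, hpair]
  linarith

end Conjugate

section Biconjugate

variable {Ω : Type*} [MeasurableSpace Ω] {P : Measure Ω} [IsProbabilityMeasure P]
  {ρ ρbb : Lp ℝ ⊤ P → ℝ}

def IsBiconjugate (P : Measure Ω) [IsProbabilityMeasure P] (ρ ρbb : Lp ℝ ⊤ P → ℝ) : Prop :=
  ∀ X, (ρbb X : EReal) = ⨆ Y : Lp ℝ 1 P, ((∫ ω, X ω * Y ω ∂P : ℝ) : EReal) - conjugate P ρ Y

theorem IsBiconjugate.integral_mul_sub_le (h : IsBiconjugate P ρ ρbb) (Z : Lp ℝ ⊤ P)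
    {Y : Lp ℝ 1 P} {r : ℝ} (hY : conjugate P ρ Y = r) : ∫ ω, Z ω * Y ω ∂P - r ≤ ρbb Z := by
  have hle : ((∫ ω, Z ω * Y ω ∂P : ℝ) : EReal) - conjugate P ρ Y ≤ ρbb Z := by
    rw [h Z]
    exact le_iSup (fun Y => ((∫ ω, Z ω * Y ω ∂P : ℝ) : EReal) - conjugate P ρ Y) Y
  rwa [hY, ← EReal.coe_sub, EReal.coe_le_coe_iff] at hle

theorem IsBiconjugate.le_of_forall (h : IsBiconjugate P ρ ρbb) {Z : Lp ℝ ⊤ P} {c : ℝ}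
    (hc : ∀ (Y : Lp ℝ 1 P) (r : ℝ), conjugate P ρ Y = r → ∫ ω, Z ω * Y ω ∂P - r ≤ c) :
    ρbb Z ≤ c := by
  rw [← EReal.coe_le_coe_iff, h Z]
  refine iSup_le fun Y => ?_
  induction hY : conjugate P ρ Y using EReal.rec with
  | bot => exact absurd hY (conjugate_ne_bot ρ Y)
  | coe r => rw [← EReal.coe_sub, EReal.coe_le_coe_iff]; exact hc Y r hY
  | top => rw [EReal.sub_top]; exact bot_le

theorem IsBiconjugate.exists_conjugate_eq_coe (h : IsBiconjugate P ρ ρbb) :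
    ∃ (Y : Lp ℝ 1 P) (r : ℝ), conjugate P ρ Y = r := by
  by_contra hnone
  have hle : ρbb 0 ≤ ρbb 0 - 1 := h.le_of_forall fun Y r hY => absurd ⟨Y, r, hY⟩ hnone
  linarith

theorem IsBiconjugate.le_add_of_forall_sublevel (h : IsBiconjugate P ρ ρbb)
    (hmono : ∀ X Y : Lp ℝ ⊤ P, X ≤ Y → ρ X ≤ ρ Y)
    (hcash : ∀ (X : Lp ℝ ⊤ P) (a : ℝ), ρ (X + Lp.const ⊤ P a) = ρ X + a)
    {Y₀ : Lp ℝ 1 P} {r₀ : ℝ} (hY₀ : conjugate P ρ Y₀ = r₀) {M lam : ℝ}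
    (hlam : ρ 0 + 2 * M + 2 * (M * ‖Y₀‖ + r₀) ≤ lam)
    {Z Z' : Lp ℝ ⊤ P} (hZ : ‖Z‖ ≤ M) (hZ' : ‖Z'‖ ≤ M) {ε : ℝ} (hε : 0 ≤ ε)
    (hsub : ∀ Y, conjugate P ρ Y ≤ lam → ∫ ω, Z ω * Y ω ∂P - ∫ ω, Z' ω * Y ω ∂P ≤ ε) :
    ρbb Z ≤ ρbb Z' + ε := by
  have hM : 0 ≤ M := (norm_nonneg Z).trans hZ
  have hpair : ∀ {Z : Lp ℝ ⊤ P}, ‖Z‖ ≤ M → ∀ Y : Lp ℝ 1 P, |∫ ω, Z ω * Y ω ∂P| ≤ M * ‖Y‖ :=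
    fun hZ Y => (abs_integral_mul_le _ Y).trans (mul_le_mul_of_nonneg_right hZ (norm_nonneg Y))
  have hlow : -(M * ‖Y₀‖) - r₀ ≤ ρbb Z' := by
    linarith [h.integral_mul_sub_le Z' hY₀, neg_abs_le (∫ ω, Z' ω * Y₀ ω ∂P), hpair hZ' Y₀]
  refine h.le_of_forall fun Y r hY => ?_
  rcases le_or_gt r lam with hr | hr
  · linarith [hsub Y (hY ▸ EReal.coe_le_coe hr), h.integral_mul_sub_le Z' hY]
  · -- `2 M ‖Y‖ ≤ ρ*(Y) + ρ(0) + 2 M` puts `∫ Z Y - ρ*(Y) ≤ M ‖Y‖ - ρ*(Y)` below `hlow`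
    have hYr := mul_norm_sub_le_conjugate hmono hcash (by positivity : 0 ≤ 2 * M) Y
    rw [hY, EReal.coe_le_coe_iff] at hYr
    linarith [le_abs_self (∫ ω, Z ω * Y ω ∂P), hpair hZ Y]

end Biconjugate

section Lebesgue

variable {Ω : Type*} [MeasurableSpace Ω] {P : Measure Ω} [IsProbabilityMeasure P]
  {ρ : Lp ℝ ⊤ P → ℝ} {lam : ℝ} {Xn : ℕ → Lp ℝ ⊤ P} {X : Lp ℝ ⊤ P} {Y : ℕ → Lp ℝ 1 P}

theorem LebesgueProperty.eventually_mul_integral_lt (hleb : LebesgueProperty P ρ)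
    (hbdd : ∃ M, ∀ n, ‖Xn n‖ ≤ M) (htm : TendstoInMeasure P (fun n => ⇑(Xn n)) atTop ⇑X)
    (hY : ∀ n, conjugate P ρ (Y n) ≤ lam) (κ : ℝ) :
    ∀ᶠ n in atTop, κ * ∫ ω, |(Xn n - X) ω| * |Y n ω| ∂P < lam + ρ 0 + 1 := by
  obtain ⟨M, hM⟩ := hbdd
  set U : ℕ → Lp ℝ ⊤ P := fun n => κ • signMulAbs (Y n) (Xn n - X)
  have hU_bdd : ∀ n, ‖U n‖ ≤ ‖κ‖ * (M + ‖X‖) := fun n =>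
    (norm_smul_le _ _).trans <| mul_le_mul_of_nonneg_left
      ((norm_signMulAbs_le _ _).trans ((norm_sub_le _ _).trans (by linarith [hM n])))
      (norm_nonneg κ)
  have hU : TendstoInMeasure P (fun n => ⇑(U n)) atTop ⇑(0 : Lp ℝ ⊤ P) := by
    refine (htm.of_norm_le_mul_norm_sub (C := ‖κ‖) fun n => ?_).congr_right
      (Lp.coeFn_zero ℝ ⊤ P).symm
    filter_upwards [Lp.coeFn_smul κ (signMulAbs (Y n) (Xn n - X)),
      ae_abs_signMulAbs_le (Y n) (Xn n - X), Lp.coeFn_sub (Xn n) X] with ω hsmul habs hsub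
    rw [hsub] at habs
    rw [hsmul, Pi.smul_apply, norm_smul]
    exact mul_le_mul_of_nonneg_left habs (norm_nonneg κ)
  have hpair : ∀ n, ∫ ω, U n ω * Y n ω ∂P = κ * ∫ ω, |(Xn n - X) ω| * |Y n ω| ∂P := by
    intro n
    rw [← integral_signMulAbs_mul, ← integral_const_mul]
    refine integral_congr_ae ?_
    filter_upwards [Lp.coeFn_smul κ (signMulAbs (Y n) (Xn n - X))] with ω hω
    rw [hω, Pi.smul_apply, smul_eq_mul, mul_assoc]
  filter_upwards [(hleb U 0 ⟨_, hU_bdd⟩ hU).eventually_lt_const (lt_add_one _)]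
    with n hn
  linarith [integral_mul_sub_le_of_conjugate_le (U n) (hY n), hpair n]

theorem LebesgueProperty.tendsto_integral_abs_sub_mul (hleb : LebesgueProperty P ρ)
    (hbdd : ∃ M, ∀ n, ‖Xn n‖ ≤ M) (htm : TendstoInMeasure P (fun n => ⇑(Xn n)) atTop ⇑X)
    (hY : ∀ n, conjugate P ρ (Y n) ≤ lam) :
    Tendsto (fun n => ∫ ω, |(Xn n - X) ω| * |Y n ω| ∂P) atTop (𝓝 0) := by
  refine tendsto_order.2 ⟨fun a ha => Eventually.of_forall fun n =>
    ha.trans_le (integral_nonneg fun ω => by positivity), fun ε hε => ?_⟩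
  have hκ : 0 < (|lam + ρ 0| + 1) / ε := by positivity
  filter_upwards [hleb.eventually_mul_integral_lt hbdd htm hY ((|lam + ρ 0| + 1) / ε)]
    with n hn
  refine lt_of_mul_lt_mul_left (hn.trans_le ?_) hκ.le
  rw [div_mul_cancel₀ _ hε.ne']
  linarith [le_abs_self (lam + ρ 0)]

theorem LebesgueProperty.tendstoUniformlyOn_integral_mul (hleb : LebesgueProperty P ρ)
    (lam : ℝ) (hbdd : ∃ M, ∀ n, ‖Xn n‖ ≤ M)
    (htm : TendstoInMeasure P (fun n => ⇑(Xn n)) atTop ⇑X) :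
    TendstoUniformlyOn (fun n Y => ∫ ω, Xn n ω * Y ω ∂P) (fun Y => ∫ ω, X ω * Y ω ∂P) atTop
      {Y | conjugate P ρ Y ≤ lam} := by
  rw [Metric.tendstoUniformlyOn_iff]
  intro ε hε
  by_contra hfar
  obtain ⟨φ, hφ, hfarφ⟩ := extraction_of_frequently_atTop (not_eventually.1 hfar)
  simp only [not_forall, not_lt] at hfarφ
  choose Y hY hεY using hfarφ
  obtain ⟨M, hM⟩ := hbdd
  have hlim := hleb.tendsto_integral_abs_sub_mul (Xn := Xn ∘ φ) ⟨M, fun n => hM (φ n)⟩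
    (htm.comp hφ.tendsto_atTop) hY
  obtain ⟨n, hn⟩ := (hlim.eventually (gt_mem_nhds hε)).exists
  have hεn := hεY n
  rw [Real.dist_eq, abs_sub_comm, ← integral_sub_mul] at hεn
  exact (hεn.trans (abs_integral_mul_le_integral_abs_mul _ _)).not_gt hn

end Lebesgue

/-- if a risk measure `ρ` has the Lebesgue property and its biconjugate
`ρ**` is real-valued, then `ρ**` has the Lebesgue property. -/
theorem biconjugate_lebesgue_property
    {Ω : Type*} [MeasurableSpace Ω] (P : Measure Ω) [IsProbabilityMeasure P]
    (ρ : Lp ℝ ⊤ P → ℝ)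
    (hmono : ∀ X Y : Lp ℝ ⊤ P, X ≤ Y → ρ X ≤ ρ Y)
    (hcash : ∀ (X : Lp ℝ ⊤ P) (a : ℝ), ρ (X + Lp.const ⊤ P a) = ρ X + a)
    (hleb : LebesgueProperty P ρ)
    (ρbb : Lp ℝ ⊤ P → ℝ)
    (hρbb : ∀ X, (ρbb X : EReal) =
      ⨆ Y : Lp ℝ 1 P, ((∫ ω, X ω * Y ω ∂P : ℝ) : EReal) - conjugate P ρ Y) :
    LebesgueProperty P ρbb := by
  have hbi : IsBiconjugate P ρ ρbb := hρbb
  intro Xn X hbdd htm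
  obtain ⟨Y₀, r₀, hY₀⟩ := hbi.exists_conjugate_eq_coe
  obtain ⟨M, hMX, hMn⟩ : ∃ M, ‖X‖ ≤ M ∧ ∀ n, ‖Xn n‖ ≤ M := by
    obtain ⟨M, hM⟩ := hbdd
    exact ⟨max M ‖X‖, le_max_right _ _, fun n => (hM n).trans (le_max_left _ _)⟩
  have hunif := Metric.tendstoUniformlyOn_iff.1 <|
    hleb.tendstoUniformlyOn_integral_mul (ρ 0 + 2 * M + 2 * (M * ‖Y₀‖ + r₀)) hbdd htm
  refine Metric.tendsto_nhds.2 fun ε hε => ?_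
  filter_upwards [hunif (ε / 2) (half_pos hε)] with n hn
  have hle := hbi.le_add_of_forall_sublevel hmono hcash hY₀ le_rfl (hMn n) hMX (half_pos hε).le
    fun Y hY => (abs_sub_lt_iff.1 (hn Y hY)).2.le
  have hge := hbi.le_add_of_forall_sublevel hmono hcash hY₀ le_rfl hMX (hMn n) (half_pos hε).le
    fun Y hY => (abs_sub_lt_iff.1 (hn Y hY)).1.le
  rw [Real.dist_eq, abs_sub_lt_iff]
  constructor <;> linarith
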